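/- arXiv:1001.0129 — 4 statements merged into one kernel-verified Lean document; each statement's English description precedes it below -/
import Mathlib

section
/- Let P be a group, X and Y nonzero finite-dimensional complex vector spaces, and E, E′ : P → GL(X), τ, τ′ : P → GL(Y) group homomorphisms such that E(g) ⊗ τ(g) = E′(g) ⊗ τ′(g) in GL(X ⊗ Y) for every g ∈ P. Then there exists a group homomorphism χ : P → ℂˣ with E′(g) = χ(g) E(g) and τ′(g) = χ(g)⁻¹ τ(g) for all g ∈ P. -/
open scoped TensorProduct

/-- A nonzero vector admits a dual functional taking value 1 on it. -/
lemma exists_dual_one {V : Type*} [AddCommGroup V] [Module ℂ V] {v : V} (hv : v ≠ 0) :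
    ∃ f : V →ₗ[ℂ] ℂ, f v = 1 := by
  have : ¬ (∀ φ : Module.Dual ℂ V, φ v = 0) := by
    rw [Module.forall_dual_apply_eq_zero_iff]; exact hv
  push_neg at this
  obtain ⟨f, hf⟩ := this
  exact ⟨(f v)⁻¹ • f, by simp [inv_mul_cancel₀ hf]⟩

/-- Key lemma: two tensor factorizations of the same map differ by a scalar. -/
lemma tensor_map_eq_key {X Y : Type*} [AddCommGroup X] [Module ℂ X]
    [AddCommGroup Y] [Module ℂ Y] [Nontrivial X] [Nontrivial Y]
    (A A' : X →ₗ[ℂ] X) (B B' : Y →ₗ[ℂ] Y)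
    (hA : Function.Injective A) (hB : Function.Injective B)
    (heq : TensorProduct.map A B = TensorProduct.map A' B') :
    ∃ c : ℂˣ, A' = (c : ℂ) • A ∧ B' = (c : ℂ)⁻¹ • B := by
  obtain ⟨y₀, hy₀⟩ := exists_ne (0 : Y)
  have hBy₀ : B y₀ ≠ 0 := fun hz => hy₀ (hB (by simpa using hz))
  obtain ⟨f, hf⟩ := exists_dual_one hBy₀
  obtain ⟨x₀, hx₀⟩ := exists_ne (0 : X)
  have hAx₀ : A x₀ ≠ 0 := fun hz => hx₀ (hA (by simpa using hz))
  -- contraction in the second variable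
  set φ : X ⊗[ℂ] Y →ₗ[ℂ] X :=
    (TensorProduct.rid ℂ X).toLinearMap.comp (LinearMap.lTensor X f) with hφ
  have key1 : ∀ x : X, A x = f (B' y₀) • A' x := by
    intro x
    have := congrArg (fun M : X ⊗[ℂ] Y →ₗ[ℂ] X ⊗[ℂ] Y => φ (M (x ⊗ₜ[ℂ] y₀))) heq
    simpa [hφ, TensorProduct.map_tmul, hf, TensorProduct.smul_tmul',
      TensorProduct.smul_tmul] using this
  set c : ℂ := f (B' y₀) with hc
  have hcne : c ≠ 0 := by
    intro h0
    apply hAx₀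
    rw [key1 x₀, h0, zero_smul]
  have hA' : A' = c⁻¹ • A := by
    ext x
    simp [key1 x, smul_smul, inv_mul_cancel₀ hcne]
  -- contraction in the first variable
  obtain ⟨g, hg⟩ := exists_dual_one hAx₀
  set ψ : X ⊗[ℂ] Y →ₗ[ℂ] Y :=
    (TensorProduct.lid ℂ Y).toLinearMap.comp (LinearMap.rTensor Y g) with hψ
  have key2 : ∀ y : Y, B y = g (A' x₀) • B' y := by
    intro y
    have := congrArg (fun M : X ⊗[ℂ] Y →ₗ[ℂ] X ⊗[ℂ] Y => ψ (M (x₀ ⊗ₜ[ℂ] y))) heq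
    simpa [hψ, TensorProduct.map_tmul, hg, TensorProduct.smul_tmul'] using this
  have hgA' : g (A' x₀) = c⁻¹ := by
    rw [hA']; simp [hg]
  refine ⟨(Units.mk0 c hcne)⁻¹, ?_, ?_⟩
  · simpa using hA'
  · ext y
    have := key2 y
    rw [hgA'] at this
    simp only [Units.val_inv_eq_inv_val, Units.val_mk0, inv_inv, LinearMap.smul_apply]
    rw [this, smul_smul, mul_inv_cancel₀ hcne, one_smul]

lemma glval_ne_zero {X : Type*} [AddCommGroup X] [Module ℂ X] [Nontrivial X]
    (A : LinearMap.GeneralLinearGroup ℂ X) : (A.val : X →ₗ[ℂ] X) ≠ 0 := by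
  obtain ⟨x₀, hx₀⟩ := exists_ne (0 : X)
  intro h0
  have hAinj : Function.Injective (A.val : X →ₗ[ℂ] X) :=
    (LinearMap.GeneralLinearGroup.toLinearEquiv A).injective
  exact hx₀ (hAinj (by simp [h0]))

/-- If `E ⊗ τ` and `E' ⊗ τ'` are two tensor-product factorizations of the same homomorphism
`P → GL(X ⊗ Y)`, with `E, E' : P → GL(X)` and `τ, τ' : P → GL(Y)` group homomorphisms,
then there is a character `χ : P → ℂˣ` with `E'(g) = χ(g) E(g)` and
`τ'(g) = χ(g)⁻¹ τ(g)` for all `g`. -/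
theorem tensor_factorizations_differ_by_character
    {P : Type*} [Group P]
    {X Y : Type*} [AddCommGroup X] [Module ℂ X] [AddCommGroup Y] [Module ℂ Y]
    [FiniteDimensional ℂ X] [FiniteDimensional ℂ Y] [Nontrivial X] [Nontrivial Y]
    (E E' : P →* LinearMap.GeneralLinearGroup ℂ X)
    (τ τ' : P →* LinearMap.GeneralLinearGroup ℂ Y)
    (h : ∀ g : P, TensorProduct.map (E g).val (τ g).val
        = TensorProduct.map (E' g).val (τ' g).val) :
    ∃ χ : P →* ℂˣ, ∀ g : P,
      (E' g).val = (χ g : ℂ) • (E g).val ∧ (τ' g).val = (χ g : ℂ)⁻¹ • (τ g).val := by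
  have hk : ∀ g : P, ∃ c : ℂˣ,
      (E' g).val = (c : ℂ) • (E g).val ∧ (τ' g).val = (c : ℂ)⁻¹ • (τ g).val := by
    intro g
    exact tensor_map_eq_key (E g).val (E' g).val (τ g).val (τ' g).val
      (LinearMap.GeneralLinearGroup.toLinearEquiv (E g)).injective
      (LinearMap.GeneralLinearGroup.toLinearEquiv (τ g)).injective (h g)
  choose χf hχ1 hχ2 using hk
  -- uniqueness of the scalar
  have huniq : ∀ (g : P) (d : ℂˣ), (E' g).val = (d : ℂ) • (E g).val → d = χf g := by
    intro g d hd
    have hEne : (E g).val ≠ 0 := glval_ne_zero (E g)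
    have : (d : ℂ) • (E g).val = (χf g : ℂ) • (E g).val := by rw [← hd, hχ1 g]
    exact Units.ext (smul_left_injective ℂ hEne this)
  refine ⟨{ toFun := χf, map_one' := ?_, map_mul' := ?_ }, fun g => ⟨hχ1 g, hχ2 g⟩⟩
  · symm
    apply huniq 1 1
    simp
  · intro g₁ g₂
    symm
    apply huniq (g₁ * g₂) (χf g₁ * χf g₂)
    have hmul : (E' (g₁ * g₂)).val = (E' g₁).val * (E' g₂).val := by
      rw [map_mul]; rfl
    have hmul' : (E (g₁ * g₂)).val = (E g₁).val * (E g₂).val := by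
      rw [map_mul]; rfl
    rw [hmul, hχ1 g₁, hχ1 g₂, hmul']
    rw [smul_mul_smul_comm]
    norm_cast
end

section
/- Let J be a group, A and B subgroups with J = AB, and set H = A ∩ B. Assume that the commutator [a, b] = a b a⁻¹ b⁻¹ lies in H for all a ∈ A and b ∈ B. Let θ : H → ℂˣ be a group homomorphism with θ([a, b]) = 1 for all a ∈ A, b ∈ B. Let ρ_A : A → GL(V) and ρ_B : B → GL(W) be representations on complex vector spaces such that ρ_A(h) = θ(h)·id_V and ρ_B(h) = θ(h)·id_W for all h ∈ H. Then there is a well-defined representation ρ : J → GL(V ⊗ W) with ρ(ab) = ρ_A(a) ⊗ ρ_B(b) for all a ∈ A, b ∈ B. -/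
open scoped TensorProduct

/-- Let `J = A·B` be a group generated by two subgroups `A`, `B` with `H = A ⊓ B`,
such that all commutators `[a,b]` (`a ∈ A`, `b ∈ B`) lie in `H`, and let `θ : H → ℂˣ`
be a character killing these commutators. If `ρ_A`, `ρ_B` are representations of `A`,
`B` acting on `H` through the scalar `θ`, then there is a well-defined representation
`ρ` of `J` on `V ⊗ W` with `ρ(ab) = ρ_A(a) ⊗ ρ_B(b)` for all `a ∈ A`, `b ∈ B`. -/
theorem exists_rep_tensor_of_product_decomposition
    {J : Type*} [Group J] (A B : Subgroup J)
    (hJ : ∀ j : J, ∃ a ∈ A, ∃ b ∈ B, j = a * b)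
    (hcomm : ∀ a ∈ A, ∀ b ∈ B, a * b * a⁻¹ * b⁻¹ ∈ A ⊓ B)
    (θ : (A ⊓ B : Subgroup J) →* ℂˣ)
    (hθ : ∀ (a : J) (ha : a ∈ A) (b : J) (hb : b ∈ B),
      θ ⟨a * b * a⁻¹ * b⁻¹, hcomm a ha b hb⟩ = 1)
    {V W : Type*} [AddCommGroup V] [Module ℂ V] [AddCommGroup W] [Module ℂ W]
    (ρA : Representation ℂ A V) (ρB : Representation ℂ B W)
    (hρA : ∀ (x : J) (hxA : x ∈ A) (hxB : x ∈ B),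
      ρA ⟨x, hxA⟩ = (θ ⟨x, Subgroup.mem_inf.mpr ⟨hxA, hxB⟩⟩ : ℂ) • LinearMap.id)
    (hρB : ∀ (x : J) (hxA : x ∈ A) (hxB : x ∈ B),
      ρB ⟨x, hxB⟩ = (θ ⟨x, Subgroup.mem_inf.mpr ⟨hxA, hxB⟩⟩ : ℂ) • LinearMap.id) :
    ∃ ρ : Representation ℂ J (V ⊗[ℂ] W),
      ∀ (a : J) (ha : a ∈ A) (b : J) (hb : b ∈ B),
        ρ (a * b) = TensorProduct.map (ρA ⟨a, ha⟩) (ρB ⟨b, hb⟩) := by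

  classical
  -- Well-definedness: the tensor map depends only on the product `a * b`.
  have key : ∀ (a : J) (ha : a ∈ A) (b : J) (hb : b ∈ B) (a' : J) (ha' : a' ∈ A)
      (b' : J) (hb' : b' ∈ B), a * b = a' * b' →
      TensorProduct.map (ρA ⟨a, ha⟩) (ρB ⟨b, hb⟩)
        = TensorProduct.map (ρA ⟨a', ha'⟩) (ρB ⟨b', hb'⟩) := by
    intro a ha b hb a' ha' b' hb' hab
    have h1 : a'⁻¹ * a = b' * b⁻¹ := by
      calc a'⁻¹ * a = a'⁻¹ * (a * b) * b⁻¹ := by group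
        _ = a'⁻¹ * (a' * b') * b⁻¹ := by rw [hab]
        _ = b' * b⁻¹ := by group
    have hA : a'⁻¹ * a ∈ A := A.mul_mem (A.inv_mem ha') ha
    have hB : a'⁻¹ * a ∈ B := by rw [h1]; exact B.mul_mem hb' (B.inv_mem hb)
    have hH : a'⁻¹ * a ∈ A ⊓ B := Subgroup.mem_inf.mpr ⟨hA, hB⟩
    have eA : ρA ⟨a, ha⟩ = (θ ⟨a'⁻¹ * a, hH⟩ : ℂ) • ρA ⟨a', ha'⟩ := by
      have e : (⟨a, ha⟩ : A) = ⟨a', ha'⟩ * ⟨a'⁻¹ * a, hA⟩ := by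
        ext; simp [mul_assoc]
      rw [e, map_mul, hρA _ hA hB]
      ext v
      simp
    have eB : ρB ⟨b', hb'⟩ = (θ ⟨a'⁻¹ * a, hH⟩ : ℂ) • ρB ⟨b, hb⟩ := by
      have e : (⟨b', hb'⟩ : B) = ⟨a'⁻¹ * a, hB⟩ * ⟨b, hb⟩ := by
        ext; simp [h1, mul_assoc]
      rw [e, map_mul, hρB _ hA hB]
      ext v
      simp
    rw [eA, eB, TensorProduct.map_smul_left, TensorProduct.map_smul_right]
  choose aa haA bb hbB heq using hJ
  set F : J → (V ⊗[ℂ] W →ₗ[ℂ] V ⊗[ℂ] W) :=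
    fun j => TensorProduct.map (ρA ⟨aa j, haA j⟩) (ρB ⟨bb j, hbB j⟩) with hF
  have key2 : ∀ (a : J) (ha : a ∈ A) (b : J) (hb : b ∈ B),
      F (a * b) = TensorProduct.map (ρA ⟨a, ha⟩) (ρB ⟨b, hb⟩) := by
    intro a ha b hb
    exact key _ _ _ _ a ha b hb (heq (a * b)).symm
  refine ⟨{ toFun := F, map_one' := ?_, map_mul' := ?_ }, ?_⟩
  · have h := key2 1 A.one_mem 1 B.one_mem
    rw [mul_one] at h
    rw [h]
    have e1 : (⟨(1 : J), A.one_mem⟩ : A) = 1 := rfl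
    have e2 : (⟨(1 : J), B.one_mem⟩ : B) = 1 := rfl
    rw [e1, e2, map_one, map_one]
    ext v
    simp
  · intro x y
    -- decompose x = a1 b1, y = a2 b2
    set a1 := aa x with ha1d; set b1 := bb x with hb1d
    set a2 := aa y with ha2d; set b2 := bb y with hb2d
    have ha1 := haA x; have hb1 := hbB x; have hx := heq x
    have ha2 := haA y; have hb2 := hbB y; have hy := heq y
    have hcH : a2⁻¹ * b1 * a2 * b1⁻¹ ∈ A ⊓ B := by
      have := hcomm a2⁻¹ (A.inv_mem ha2) b1 hb1
      simpa using this
    set h : J := a2⁻¹ * b1 * a2 * b1⁻¹ with hh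
    have hθ1 : θ ⟨h, hcH⟩ = 1 := by
      have := hθ a2⁻¹ (A.inv_mem ha2) b1 hb1
      convert this using 2
      simp [hh]
    have haH : a1 * a2 * h ∈ A := A.mul_mem (A.mul_mem ha1 ha2) hcH.1
    have hbH : b1 * b2 ∈ B := B.mul_mem hb1 hb2
    have hdec : x * y = (a1 * a2 * h) * (b1 * b2) := by
      rw [hx, hy, hh]; group; rfl
    show F (x * y) = F x * F y
    rw [hdec, key2 _ haH _ hbH, hx, hy, key2 _ ha1 _ hb1, key2 _ ha2 _ hb2]
    have eA : ρA ⟨a1 * a2 * h, haH⟩ = ρA ⟨a1, ha1⟩ * ρA ⟨a2, ha2⟩ := by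
      have e : (⟨a1 * a2 * h, haH⟩ : A) = ⟨a1, ha1⟩ * ⟨a2, ha2⟩ * ⟨h, hcH.1⟩ := by
        ext; simp [mul_assoc]
      rw [e, map_mul, map_mul, hρA h hcH.1 hcH.2]
      have : (⟨h, Subgroup.mem_inf.mpr ⟨hcH.1, hcH.2⟩⟩ : (A ⊓ B : Subgroup J)) = ⟨h, hcH⟩ := rfl
      rw [this, hθ1]
      ext v
      simp
    have eB : ρB ⟨b1 * b2, hbH⟩ = ρB ⟨b1, hb1⟩ * ρB ⟨b2, hb2⟩ := by
      have e : (⟨b1 * b2, hbH⟩ : B) = ⟨b1, hb1⟩ * ⟨b2, hb2⟩ := rfl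
      rw [e, map_mul]
    rw [eA, eB]
    ext v w
    simp
    rfl
  · intro a ha b hb
    exact key2 a ha b hb
end

section
/- Let q > 1 and c > 0 be real numbers, let r₀ ≥ 0 and r₁ ≥ 0 be real numbers, let α and μ be nonzero complex numbers, and let s₁, s₂ be real numbers. If the multiset of complex numbers { q^{c s₁} μ, q^{−c s₁} μ, −q^{c s₂} μ, −q^{−c s₂} μ } equals the multiset { α, −q^{r₀} α, −q^{r₁} α, q^{r₀+r₁} α }, then the unordered pair {|s₁|, |s₂|} equals the unordered pair {(r₀ + r₁)/(2c), |r₀ − r₁|/(2c)}. -/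
private lemma rpow_inj' {q x y : ℝ} (hq : 1 < q) (h : q ^ x = q ^ y) : x = y := by
  have hq0 : (0:ℝ) < q := by linarith
  have hl : Real.log q ≠ 0 := ne_of_gt (Real.log_pos hq)
  have := congrArg Real.log h
  rw [Real.log_rpow hq0, Real.log_rpow hq0] at this
  exact mul_right_cancel₀ hl this

private lemma absA {q c r₀ r₁ s u : ℝ} (hq : 1 < q) (hc : 0 < c) (hr : 0 ≤ r₀ + r₁)
    (hu : u = q ^ (-((r₀ + r₁)/2)))
    (ha : q ^ (c * s) = u ∨ q ^ (c * s) = q ^ (r₀ + r₁) * u) :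
    |s| = (r₀ + r₁) / (2 * c) := by
  have hq0 : (0:ℝ) < q := by linarith
  have key : c * s = -((r₀ + r₁)/2) ∨ c * s = (r₀ + r₁)/2 := by
    rcases ha with ha | ha
    · left; exact rpow_inj' hq (by rw [ha, hu])
    · right
      refine rpow_inj' hq ?_
      rw [ha, hu, ← Real.rpow_add hq0]
      ring_nf
  have habs : |c * s| = (r₀ + r₁)/2 := by
    rcases key with hk | hk <;> rw [hk]
    · rw [abs_neg]; exact abs_of_nonneg (by linarith)
    · exact abs_of_nonneg (by linarith)
  rw [abs_mul, abs_of_pos hc] at habs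
  field_simp at habs ⊢
  linarith

private lemma absB {q c r₀ r₁ s u : ℝ} (hq : 1 < q) (hc : 0 < c)
    (hu : u = q ^ (-((r₀ + r₁)/2)))
    (hb : q ^ (c * s) = q ^ r₀ * u ∨ q ^ (c * s) = q ^ r₁ * u) :
    |s| = |r₀ - r₁| / (2 * c) := by
  have hq0 : (0:ℝ) < q := by linarith
  have key : c * s = (r₀ - r₁)/2 ∨ c * s = (r₁ - r₀)/2 := by
    rcases hb with hb | hb
    · left
      refine rpow_inj' hq ?_
      rw [hb, hu, ← Real.rpow_add hq0]; ring_nf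
    · right
      refine rpow_inj' hq ?_
      rw [hb, hu, ← Real.rpow_add hq0]; ring_nf
  have habs : |c * s| = |r₀ - r₁|/2 := by
    rcases key with hk | hk <;> rw [hk, abs_div]
    · norm_num
    · rw [show r₁ - r₀ = -(r₀ - r₁) by ring, abs_neg]; norm_num
  rw [abs_mul, abs_of_pos hc] at habs
  field_simp at habs ⊢
  linarith

private lemma filtPP {x y z w : ℝ} (hx : 0 < x) (hy : 0 < y) (hz : 0 < z) (hw : 0 < w) :
    ({x, y, -z, -w} : Multiset ℝ).filter (fun v => 0 < v) = {x, y} := by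
  simp only [Multiset.insert_eq_cons, Multiset.filter_cons, Multiset.filter_singleton,
    if_pos hx, if_pos hy, if_neg (by linarith : ¬ (0:ℝ) < -z), if_neg (by linarith : ¬ (0:ℝ) < -w)]
  simp

private lemma filtNP {x y z w : ℝ} (hx : 0 < x) (hy : 0 < y) (hz : 0 < z) (hw : 0 < w) :
    ({-x, y, z, -w} : Multiset ℝ).filter (fun v => 0 < v) = {y, z} := by
  simp only [Multiset.insert_eq_cons, Multiset.filter_cons, Multiset.filter_singleton,
    if_pos hy, if_pos hz, if_neg (by linarith : ¬ (0:ℝ) < -x), if_neg (by linarith : ¬ (0:ℝ) < -w)]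
  simp

private lemma filtPPneg {x y z w : ℝ} (hx : 0 < x) (hy : 0 < y) (hz : 0 < z) (hw : 0 < w) :
    ({x, y, -z, -w} : Multiset ℝ).filter (fun v => v < 0) = {-z, -w} := by
  simp only [Multiset.insert_eq_cons, Multiset.filter_cons, Multiset.filter_singleton,
    if_neg (by linarith : ¬ x < (0:ℝ)), if_neg (by linarith : ¬ y < (0:ℝ)),
    if_pos (by linarith : -z < (0:ℝ)), if_pos (by linarith : -w < (0:ℝ))]
  simp

private lemma filtNPneg {x y z w : ℝ} (hx : 0 < x) (hy : 0 < y) (hz : 0 < z) (hw : 0 < w) :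
    ({-x, y, z, -w} : Multiset ℝ).filter (fun v => v < 0) = {-x, -w} := by
  simp only [Multiset.insert_eq_cons, Multiset.filter_cons, Multiset.filter_singleton,
    if_neg (by linarith : ¬ y < (0:ℝ)), if_neg (by linarith : ¬ z < (0:ℝ)),
    if_pos (by linarith : -x < (0:ℝ)), if_pos (by linarith : -w < (0:ℝ))]
  simp

private lemma filtR_pos {A B C t : ℝ} (hA : 0 < A) (hB : 0 < B) (hC : 0 < C) (ht : 0 < t) :
    ({t, -(A*t), -(B*t), C*t} : Multiset ℝ).filter (fun v => 0 < v) = {t, C*t} := by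
  have h1 : ¬ (0:ℝ) < -(A*t) := by nlinarith
  have h2 : ¬ (0:ℝ) < -(B*t) := by nlinarith
  simp only [Multiset.insert_eq_cons, Multiset.filter_cons, Multiset.filter_singleton,
    if_pos ht, if_neg h1, if_neg h2, if_pos (by positivity : (0:ℝ) < C*t)]
  simp

private lemma filtR_pos_neg {A B C t : ℝ} (hA : 0 < A) (hB : 0 < B) (hC : 0 < C) (ht : 0 < t) :
    ({t, -(A*t), -(B*t), C*t} : Multiset ℝ).filter (fun v => v < 0) = {-(A*t), -(B*t)} := by
  simp only [Multiset.insert_eq_cons, Multiset.filter_cons, Multiset.filter_singleton,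
    if_neg (by nlinarith : ¬ t < (0:ℝ)), if_pos (by nlinarith : -(A*t) < (0:ℝ)),
    if_pos (by nlinarith : -(B*t) < (0:ℝ)), if_neg (by nlinarith : ¬ C*t < (0:ℝ))]
  simp

private lemma filtR_neg {A B C t : ℝ} (hA : 0 < A) (hB : 0 < B) (hC : 0 < C) (ht : t < 0) :
    ({t, -(A*t), -(B*t), C*t} : Multiset ℝ).filter (fun v => 0 < v) = {-(A*t), -(B*t)} := by
  simp only [Multiset.insert_eq_cons, Multiset.filter_cons, Multiset.filter_singleton,
    if_neg (by nlinarith : ¬ (0:ℝ) < t), if_pos (by nlinarith : (0:ℝ) < -(A*t)),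
    if_pos (by nlinarith : (0:ℝ) < -(B*t)), if_neg (by nlinarith : ¬ (0:ℝ) < C*t)]
  simp

private lemma filtR_neg_neg {A B C t : ℝ} (hA : 0 < A) (hB : 0 < B) (hC : 0 < C) (ht : t < 0) :
    ({t, -(A*t), -(B*t), C*t} : Multiset ℝ).filter (fun v => v < 0) = {t, C*t} := by
  simp only [Multiset.insert_eq_cons, Multiset.filter_cons, Multiset.filter_singleton,
    if_pos ht, if_neg (by nlinarith : ¬ -(A*t) < (0:ℝ)),
    if_neg (by nlinarith : ¬ -(B*t) < (0:ℝ)), if_pos (by nlinarith : C*t < (0:ℝ))]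
  simp

/-- square-root extraction -/
private lemma t_eq {q r₀ r₁ t : ℝ} (hq : 1 < q) (ht : 0 < t)
    (hprod : t * (q ^ (r₀ + r₁) * t) = 1) : t = q ^ (-((r₀ + r₁)/2)) := by
  have hq0 : (0:ℝ) < q := by linarith
  have hC : (0:ℝ) < q ^ (r₀ + r₁) := Real.rpow_pos_of_pos hq0 _
  have hu : (0:ℝ) < q ^ (-((r₀ + r₁)/2)) := Real.rpow_pos_of_pos hq0 _
  refine (sq_eq_sq₀ ht.le hu.le).mp ?_
  have h2 : (q ^ (-((r₀ + r₁)/2)))^2 = (q ^ (r₀ + r₁))⁻¹ := by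
    rw [sq, ← Real.rpow_add hq0, ← Real.rpow_neg hq0.le]
    ring_nf
  rw [h2]
  field_simp
  nlinarith


/-- The arithmetic core of the reducibility-point computation: if the multiset
`{q^{c s₁} μ, q^{-c s₁} μ, -q^{c s₂} μ, -q^{-c s₂} μ}` of complex numbers equals
`{α, -q^{r₀} α, -q^{r₁} α, q^{r₀+r₁} α}` (with `q > 1`, `c > 0`, `r₀, r₁ ≥ 0` and
`α, μ ≠ 0`), then the unordered pair `{|s₁|, |s₂|}` is
`{(r₀+r₁)/(2c), |r₀-r₁|/(2c)}`. -/
theorem abs_pair_of_multiset_eq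
    (q c r₀ r₁ s₁ s₂ : ℝ) (hq : 1 < q) (hc : 0 < c) (hr₀ : 0 ≤ r₀) (hr₁ : 0 ≤ r₁)
    (α μ : ℂ) (hα : α ≠ 0) (hμ : μ ≠ 0)
    (h : ({((q ^ (c * s₁) : ℝ) : ℂ) * μ, ((q ^ (-(c * s₁)) : ℝ) : ℂ) * μ,
            -(((q ^ (c * s₂) : ℝ) : ℂ) * μ), -(((q ^ (-(c * s₂)) : ℝ) : ℂ) * μ)} : Multiset ℂ)
        = {α, -(((q ^ r₀ : ℝ) : ℂ) * α), -(((q ^ r₁ : ℝ) : ℂ) * α),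
            ((q ^ (r₀ + r₁) : ℝ) : ℂ) * α}) :
    ({|s₁|, |s₂|} : Multiset ℝ) = {(r₀ + r₁) / (2 * c), |r₀ - r₁| / (2 * c)} := by
  have hq0 : (0:ℝ) < q := by linarith
  have pa : (0:ℝ) < q ^ (c * s₁) := Real.rpow_pos_of_pos hq0 _
  have pa' : (0:ℝ) < q ^ (-(c * s₁)) := Real.rpow_pos_of_pos hq0 _
  have pb : (0:ℝ) < q ^ (c * s₂) := Real.rpow_pos_of_pos hq0 _
  have pb' : (0:ℝ) < q ^ (-(c * s₂)) := Real.rpow_pos_of_pos hq0 _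
  have pA : (0:ℝ) < q ^ r₀ := Real.rpow_pos_of_pos hq0 _
  have pB : (0:ℝ) < q ^ r₁ := Real.rpow_pos_of_pos hq0 _
  have pC : (0:ℝ) < q ^ (r₀ + r₁) := Real.rpow_pos_of_pos hq0 _
  -- Step 1: α is a real multiple of μ
  obtain ⟨t, ht0, hαt⟩ : ∃ t : ℝ, t ≠ 0 ∧ α = ((t:ℝ):ℂ) * μ := by
    have hmem : α ∈ ({((q ^ (c * s₁) : ℝ) : ℂ) * μ, ((q ^ (-(c * s₁)) : ℝ) : ℂ) * μ,
        -(((q ^ (c * s₂) : ℝ) : ℂ) * μ), -(((q ^ (-(c * s₂)) : ℝ) : ℂ) * μ)} : Multiset ℂ) := by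
      rw [h]; simp
    simp only [Multiset.insert_eq_cons, Multiset.mem_cons, Multiset.mem_singleton] at hmem
    rcases hmem with h1 | h1 | h1 | h1
    · exact ⟨_, ne_of_gt pa, h1⟩
    · exact ⟨_, ne_of_gt pa', h1⟩
    · exact ⟨-(q ^ (c * s₂)), ne_of_lt (neg_neg_iff_pos.mpr pb), by push_cast; rw [h1]; ring⟩
    · exact ⟨-(q ^ (-(c * s₂))), ne_of_lt (neg_neg_iff_pos.mpr pb'), by push_cast; rw [h1]; ring⟩
  rw [hαt] at h
  -- Step 2: pass to a multiset of real numbers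
  have h2 := congrArg (Multiset.map (fun z : ℂ => (z * μ⁻¹).re)) h
  simp only [Multiset.insert_eq_cons, Multiset.map_cons, Multiset.map_singleton,
    neg_mul, mul_assoc, mul_inv_cancel₀ hμ, mul_one, Complex.neg_re, ← Complex.ofReal_mul,
    Complex.ofReal_re] at h2
  have h3 : ({q ^ (c * s₁), q ^ (-(c * s₁)), -(q ^ (c * s₂)), -(q ^ (-(c * s₂)))} : Multiset ℝ)
      = {t, -(q ^ r₀ * t), -(q ^ r₁ * t), q ^ (r₀ + r₁) * t} := h2
  clear h2 h
  rcases ht0.lt_or_gt with htneg | htpos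
  · -- t < 0
    set t' : ℝ := -t with ht'
    have ht'pos : 0 < t' := by simp [ht']; linarith
    have hp := congrArg (Multiset.filter (fun v : ℝ => 0 < v)) h3
    rw [filtPP pa pa' pb pb', filtR_neg pA pB pC htneg] at hp
    have hn := congrArg (Multiset.filter (fun v : ℝ => v < 0)) h3
    rw [filtPPneg pa pa' pb pb', filtR_neg_neg pA pB pC htneg] at hn
    -- product of the positive pair
    have hprodm := congrArg Multiset.prod hp
    simp only [Multiset.insert_eq_cons, Multiset.prod_cons, Multiset.prod_singleton] at hprodm
    have hone : q ^ (c * s₁) * q ^ (-(c * s₁)) = 1 := by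
      rw [← Real.rpow_add hq0]; simp
    have hAB : q ^ (r₀ + r₁) = q ^ r₀ * q ^ r₁ := Real.rpow_add hq0 _ _
    have hprod : t' * (q ^ (r₀ + r₁) * t') = 1 := by
      rw [← hone, hprodm, hAB, ht']; ring
    have hu : t' = q ^ (-((r₀ + r₁)/2)) := t_eq hq ht'pos hprod
    -- membership for s₁
    have hma : q ^ (c * s₁) ∈ ({-(q ^ r₀ * t), -(q ^ r₁ * t)} : Multiset ℝ) := by
      rw [← hp]; simp
    simp only [Multiset.insert_eq_cons, Multiset.mem_cons, Multiset.mem_singleton] at hma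
    have hs1 : |s₁| = |r₀ - r₁| / (2 * c) := by
      refine absB hq hc hu ?_
      rcases hma with h' | h' <;> [left; right] <;> rw [h'] <;> ring
    -- membership for s₂
    have hmb : -(q ^ (c * s₂)) ∈ ({t, q ^ (r₀ + r₁) * t} : Multiset ℝ) := by
      rw [← hn]; simp
    simp only [Multiset.insert_eq_cons, Multiset.mem_cons, Multiset.mem_singleton] at hmb
    have hs2 : |s₂| = (r₀ + r₁) / (2 * c) := by
      refine absA hq hc (by linarith) hu ?_
      rcases hmb with h' | h' <;> [left; right] <;> [skip; rw [show q ^ (r₀+r₁) * t' = -(q ^ (r₀+r₁) * t) by rw [ht']; ring]] <;> linarith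
    rw [hs1, hs2, Multiset.pair_comm]
  · -- t > 0
    have hp := congrArg (Multiset.filter (fun v : ℝ => 0 < v)) h3
    rw [filtPP pa pa' pb pb', filtR_pos pA pB pC htpos] at hp
    have hn := congrArg (Multiset.filter (fun v : ℝ => v < 0)) h3
    rw [filtPPneg pa pa' pb pb', filtR_pos_neg pA pB pC htpos] at hn
    have hprodm := congrArg Multiset.prod hp
    simp only [Multiset.insert_eq_cons, Multiset.prod_cons, Multiset.prod_singleton] at hprodm
    have hone : q ^ (c * s₁) * q ^ (-(c * s₁)) = 1 := by
      rw [← Real.rpow_add hq0]; simp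
    have hprod : t * (q ^ (r₀ + r₁) * t) = 1 := by rw [← hone, hprodm]
    have hu : t = q ^ (-((r₀ + r₁)/2)) := t_eq hq htpos hprod
    have hma : q ^ (c * s₁) ∈ ({t, q ^ (r₀ + r₁) * t} : Multiset ℝ) := by
      rw [← hp]; simp
    simp only [Multiset.insert_eq_cons, Multiset.mem_cons, Multiset.mem_singleton] at hma
    have hs1 : |s₁| = (r₀ + r₁) / (2 * c) := absA hq hc (by linarith) hu hma
    have hmb : -(q ^ (c * s₂)) ∈ ({-(q ^ r₀ * t), -(q ^ r₁ * t)} : Multiset ℝ) := by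
      rw [← hn]; simp
    simp only [Multiset.insert_eq_cons, Multiset.mem_cons, Multiset.mem_singleton] at hmb
    have hs2 : |s₂| = |r₀ - r₁| / (2 * c) := by
      refine absB hq hc hu ?_
      rcases hmb with h' | h' <;> [left; right] <;> linarith
    rw [hs1, hs2]
end

section
/- Let J′ be a finite group, H′ a subgroup of J′, θ′ : H′ → ℂˣ a one-dimensional character, and η′ an irreducible complex representation of J′ such that the induced representation Ind_{H′}^{J′} θ′ is isomorphic to a direct sum of m copies of η′ for some m ≥ 1. Let A be a subgroup of J′ and θ : A → ℂˣ a character such that θ and θ′ agree on A ∩ H′. Then there exists a nonzero vector v in the space of η′ with η′(a) v = θ(a) v for all a ∈ A; equivalently, Hom_A(θ, Res_A η′) ≠ 0. -/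
/-- The space of the representation of `K` induced from a representation `ρ` of a
subgroup `H ≤ K` (in the function model, which for a finite group `K` is isomorphic to
`ℂ[K] ⊗_{ℂ[H]} V`): functions `f : K → V` satisfying `f (h * k) = ρ h (f k)`. -/
noncomputable def IndSubmodule {K : Type*} [Group K] (H : Subgroup K) {V : Type*}
    [AddCommGroup V] [Module ℂ V] (ρ : Representation ℂ H V) : Submodule ℂ (K → V) where
  carrier := {f | ∀ (h : H) (k : K), f (↑h * k) = ρ h (f k)}
  add_mem' := by
    intro f g hf hg h k
    simp only [Pi.add_apply, hf h k, hg h k, map_add]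
  zero_mem' := by
    intro h k
    simp only [Pi.zero_apply, map_zero]
  smul_mem' := by
    intro c f hf h k
    simp only [Pi.smul_apply, hf h k, map_smul]

/-- The action of `g ∈ K` on the induced representation space, by right translation:
`(g • f) (k) = f (k * g)`.  Together these maps constitute the induced representation
`Ind_H^K ρ`. -/
noncomputable def indAction {K : Type*} [Group K] (H : Subgroup K) {V : Type*}
    [AddCommGroup V] [Module ℂ V] (ρ : Representation ℂ H V) (g : K) :
    IndSubmodule H ρ →ₗ[ℂ] IndSubmodule H ρ where
  toFun f := ⟨fun k => f.val (k * g), fun h k => by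
    show f.val (↑h * k * g) = ρ h (f.val (k * g))
    rw [mul_assoc]; exact f.property h (k * g)⟩
  map_add' f₁ f₂ := rfl
  map_smul' c f := rfl

/-- The one-dimensional representation on `ℂ` attached to a character `θ : G → ℂˣ`. -/
noncomputable def charRep {G : Type*} [Monoid G] (θ : G →* ℂˣ) :
    Representation ℂ G ℂ where
  toFun g := (θ g : ℂ) • LinearMap.id
  map_one' := by
    refine LinearMap.ext fun x => ?_
    simp
  map_mul' g h := by
    refine LinearMap.ext fun x => ?_
    simp [mul_smul]
    ring

section Aux

variable {J' : Type*} [Group J'] {H' A : Subgroup J'} (θ' : H' →* ℂˣ) (θ : A →* ℂˣ)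

private lemma key_agree
    (hagree : ∀ (x : J') (hA : x ∈ A) (hH : x ∈ H'), θ ⟨x, hA⟩ = θ' ⟨x, hH⟩)
    {h₁ h₂ : H'} {a₁ a₂ : A} (heq : (h₁ : J') * (a₁ : J') = (h₂ : J') * (a₂ : J')) :
    ((θ' h₁ : ℂˣ) : ℂ) * ((θ a₁ : ℂˣ) : ℂ) = ((θ' h₂ : ℂˣ) : ℂ) * ((θ a₂ : ℂˣ) : ℂ) := by
  have hx : ((h₂ : J'))⁻¹ * (h₁ : J') = (a₂ : J') * ((a₁ : J'))⁻¹ := by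
    rw [inv_mul_eq_iff_eq_mul, ← mul_assoc, ← heq, mul_assoc, mul_inv_cancel, mul_one]
  have hxH : ((h₂ : J'))⁻¹ * (h₁ : J') ∈ H' := mul_mem (inv_mem h₂.2) h₁.2
  have hxA : ((h₂ : J'))⁻¹ * (h₁ : J') ∈ A := hx ▸ mul_mem a₂.2 (inv_mem a₁.2)
  have h1 : θ ⟨_, hxA⟩ = θ' ⟨_, hxH⟩ := hagree _ hxA hxH
  have e1 : (⟨((h₂ : J'))⁻¹ * (h₁ : J'), hxH⟩ : H') = h₂⁻¹ * h₁ := by ext; rfl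
  have e2 : (⟨((h₂ : J'))⁻¹ * (h₁ : J'), hxA⟩ : A) = a₂ * a₁⁻¹ := by ext; exact hx
  rw [e1, e2] at h1
  have h2 : θ a₂ * (θ a₁)⁻¹ = (θ' h₂)⁻¹ * θ' h₁ := by
    rw [← map_inv, ← map_mul, ← map_inv, ← map_mul, h1]
  have := congrArg (fun u : ℂˣ => (u : ℂ)) h2
  simp only [Units.val_mul, Units.val_inv_eq_inv_val] at this
  field_simp at this
  linear_combination -this

/-- decomposability predicate -/
private def decP (H' A : Subgroup J') (k : J') : Prop :=
  ∃ p : H' × A, (p.1 : J') * (p.2 : J') = k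

open Classical in
private noncomputable def fθ (k : J') : ℂ :=
  if h : decP H' A k then ((θ' h.choose.1 : ℂˣ) : ℂ) * ((θ h.choose.2 : ℂˣ) : ℂ) else 0

private lemma fθ_spec
    (hagree : ∀ (x : J') (hA : x ∈ A) (hH : x ∈ H'), θ ⟨x, hA⟩ = θ' ⟨x, hH⟩)
    {k : J'} (h : H') (a : A) (hk : (h : J') * (a : J') = k) :
    fθ θ' θ k = ((θ' h : ℂˣ) : ℂ) * ((θ a : ℂˣ) : ℂ) := by
  have hd : decP H' A k := ⟨(h, a), hk⟩
  rw [fθ]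
  rw [dif_pos hd]
  exact key_agree θ' θ hagree (hd.choose_spec.trans hk.symm)

private lemma fθ_zero {k : J'} (hk : ¬ decP H' A k) : fθ θ' θ k = 0 := dif_neg hk

end Aux

/-- Let `J'` be a finite group, `H'` a subgroup, `θ' : H' → ℂˣ` a character and `η'` an
irreducible representation of `J'` such that `Ind_{H'}^{J'} θ'` is isomorphic to a direct
sum of `m ≥ 1` copies of `η'`.  If `A` is a subgroup of `J'` and `θ : A → ℂˣ` a character
agreeing with `θ'` on `A ∩ H'`, then `η'` contains a nonzero vector on which `A` acts
through `θ`; i.e. `Hom_A(θ, Res_A η') ≠ 0`. -/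
theorem exists_theta_eigenvector_in_eta
    {J' : Type*} [Group J'] [Finite J'] (H' A : Subgroup J')
    (θ' : H' →* ℂˣ) (θ : A →* ℂˣ)
    (hagree : ∀ (x : J') (hA : x ∈ A) (hH : x ∈ H'), θ ⟨x, hA⟩ = θ' ⟨x, hH⟩)
    {V' : Type*} [AddCommGroup V'] [Module ℂ V'] [FiniteDimensional ℂ V']
    (η' : Representation ℂ J' V')
    (hirr : ∀ p : Submodule ℂ V', (∀ (g : J'), ∀ v ∈ p, η' g v ∈ p) → p = ⊥ ∨ p = ⊤)
    (m : ℕ) (hm : 1 ≤ m)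
    (hiso : ∃ T : IndSubmodule H' (charRep θ') ≃ₗ[ℂ] (Fin m → V'),
      ∀ (g : J') (f : IndSubmodule H' (charRep θ')),
        T (indAction H' (charRep θ') g f) = fun i => η' g (T f i)) :
    ∃ v : V', v ≠ 0 ∧ ∀ (a : J') (ha : a ∈ A),
      η' a v = (θ ⟨a, ha⟩ : ℂ) • v := by
  obtain ⟨T, hT⟩ := hiso
  -- the function fθ lies in the induced module
  have fmem : fθ θ' θ ∈ IndSubmodule H' (charRep θ') := by
    intro h k
    show fθ θ' θ ((h : J') * k) = ((θ' h : ℂˣ) : ℂ) • fθ θ' θ k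
    by_cases hk : decP H' A k
    · obtain ⟨⟨h₀, a₀⟩, hk0⟩ := hk
      have h1 := fθ_spec θ' θ hagree h₀ a₀ hk0
      have h2 : ((h * h₀ : H') : J') * (a₀ : J') = (h : J') * k := by
        rw [← hk0]; push_cast; rw [mul_assoc]
      have := fθ_spec θ' θ hagree (h * h₀) a₀ h2
      rw [this, h1, map_mul]
      simp [mul_assoc]
    · have hk2 : ¬ decP H' A ((h : J') * k) := by
        rintro ⟨⟨h₁, a₁⟩, he⟩
        exact hk ⟨(h⁻¹ * h₁, a₁), by push_cast; rw [mul_assoc, he, ← mul_assoc,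
          inv_mul_cancel, one_mul]⟩
      rw [fθ_zero θ' θ hk, fθ_zero θ' θ hk2, smul_zero]
  set F : IndSubmodule H' (charRep θ') := ⟨fθ θ' θ, fmem⟩ with hF
  -- F is nonzero
  have hF1 : fθ θ' θ 1 = 1 := by
    rw [fθ_spec θ' θ hagree (1 : H') (1 : A) (by simp)]
    simp
  have hFne : F ≠ 0 := by
    intro h0
    have : fθ θ' θ 1 = 0 := by
      have := congrArg (fun x : IndSubmodule H' (charRep θ') => (x : J' → ℂ) 1) h0
      simpa [hF] using this
    rw [hF1] at this; exact one_ne_zero this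
  -- A acts on F through θ
  have hact : ∀ (a : J') (ha : a ∈ A),
      indAction H' (charRep θ') a F = ((θ ⟨a, ha⟩ : ℂˣ) : ℂ) • F := by
    intro a ha
    apply Subtype.ext
    funext k
    show fθ θ' θ (k * a) = ((θ ⟨a, ha⟩ : ℂˣ) : ℂ) • fθ θ' θ k
    by_cases hk : decP H' A k
    · obtain ⟨⟨h₀, a₀⟩, hk0⟩ := hk
      have h1 := fθ_spec θ' θ hagree h₀ a₀ hk0
      have h2 : (h₀ : J') * ((a₀ * ⟨a, ha⟩ : A) : J') = k * a := by
        rw [← hk0]; push_cast; rw [mul_assoc]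
      have := fθ_spec θ' θ hagree h₀ (a₀ * ⟨a, ha⟩) h2
      rw [this, h1, map_mul]
      simp only [Units.val_mul, smul_eq_mul]; ring
    · have hk2 : ¬ decP H' A (k * a) := by
        rintro ⟨⟨h₁, a₁⟩, he⟩
        exact hk ⟨(h₁, a₁ * ⟨a, ha⟩⁻¹), by push_cast; rw [← mul_assoc, he, mul_assoc,
          mul_inv_cancel, mul_one]⟩
      rw [fθ_zero θ' θ hk, fθ_zero θ' θ hk2, smul_zero]
  -- transfer to V'
  have hTne : T F ≠ 0 := fun h0 => hFne (by simpa using congrArg T.symm h0)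
  obtain ⟨i, hi⟩ : ∃ i, T F i ≠ 0 := by
    by_contra hc
    push_neg at hc
    exact hTne (funext hc)
  refine ⟨T F i, hi, fun a ha => ?_⟩
  have h1 := congrFun (hT a F) i
  rw [hact a ha, map_smul] at h1
  simpa using h1.symm
end
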